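/- Let F and F' be adjacent faces of a triangulation whose z-monodromies satisfy M_F = D_F and M_{F'} = D_{F'}. Then there is a unique (up to reversal) zigzag whose face shadow contains both F and F', and this face shadow is a cyclic sequence of the form F, F', ..., F, ..., F', F, ..., F', ..., i.e., the occurrences of F and F' alternate. -/

import Mathlib

/-!
A zigzag is determined by two consecutive edges, read forwards or backwards. If `M_F = D_F` and a
zigzag passes the edges `(a, c), (c, b)` of `F = {a, b, c}`, the next edges of `F` on it are
`(b, a), (a, c)`, then `(c, b), (b, a)`, and then `(a, c), (c, b)` again, one period later. These
three visits contain every pair of distinct edges of `F` in one order or the other, so every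
zigzag through `F` is this one or its reverse. Starting the zigzag on the common edge `xy` of `F`
and `F'`, the patterns of the two faces are tied together at the passages through `xy`, which
forces their visits to interleave.
-/

open Finset

/-- A (combinatorial) triangulation of a connected closed surface:
a finite set of triangular faces such that every edge lies in exactly two
faces, two distinct faces meet in at most an edge, and the dual graph is
connected. -/
structure Triangulation (V : Type) [Fintype V] [DecidableEq V] where
  faces : Finset (Finset V)
  faces_nonempty : faces.Nonempty
  card_eq : ∀ F ∈ faces, F.card = 3
  edge_two_faces : ∀ e : Finset V, e.card = 2 → (∃ F ∈ faces, e ⊆ F) →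
      (faces.filter fun F => e ⊆ F).card = 2
  inter_le : ∀ F ∈ faces, ∀ F' ∈ faces, F ≠ F' → (F ∩ F').card ≤ 2
  connected : ∀ F ∈ faces, ∀ F' ∈ faces,
      Relation.ReflTransGen
        (fun A B => A ∈ faces ∧ B ∈ faces ∧ (A ∩ B).card = 2) F F'

namespace Triangulation

variable {V : Type} [Fintype V] [DecidableEq V] (T : Triangulation V)

/-- `e` is an edge of the triangulation. -/
def IsEdge (e : Finset V) : Prop := e.card = 2 ∧ ∃ F ∈ T.faces, e ⊆ F

/-- A zigzag sequence: consecutive edges are adjacent (distinct, sharing a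
vertex and a face), the faces containing consecutive pairs are distinct, and
edges two apart are disjoint. -/
def IsZigzagSeq (f : ℕ → Finset V) : Prop :=
  (∀ i, T.IsEdge (f i)) ∧
  (∀ i, f i ≠ f (i + 1) ∧ (f i ∩ f (i + 1)).Nonempty ∧
      ∃ F ∈ T.faces, f i ⊆ F ∧ f (i + 1) ⊆ F) ∧
  (∀ i, ∀ F ∈ T.faces, ∀ F' ∈ T.faces,
      f i ⊆ F → f (i + 1) ⊆ F → f (i + 1) ⊆ F' → f (i + 2) ⊆ F' → F ≠ F') ∧
  (∀ i, f i ∩ f (i + 2) = ∅)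

/-- A zigzag: a zigzag sequence together with its (minimal) period. -/
structure Zigzag where
  seq : ℕ → Finset V
  period : ℕ
  period_pos : 0 < period
  periodic : ∀ i, seq (i + period) = seq i
  period_min : ∀ m, 0 < m → (∀ i, seq (i + m) = seq i) → period ≤ m
  isZigzag : T.IsZigzagSeq seq

variable {T}

/-- Two zigzags are the same cyclic sequence (up to a shift). -/
def Zigzag.Equiv (Z Z' : T.Zigzag) : Prop := ∃ k, ∀ i, Z'.seq i = Z.seq (i + k)

/-- `Z'` is the reversal of `Z` (up to a shift). -/
def Zigzag.IsReverseOf (Z' Z : T.Zigzag) : Prop :=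
  ∃ k, ∀ i, Z'.seq i = Z.seq (k + Z.period - i % Z.period)

/-- The zigzag `Z` contains an edge of the face `F`. -/
def Zigzag.Meets (Z : T.Zigzag) (F : Finset V) : Prop := ∃ i, Z.seq i ⊆ F

/-- `F` is the `i`-th face of the face shadow of `Z`, i.e. the face containing
the `i`-th and `(i+1)`-st edges of `Z`. -/
def Zigzag.ShadowAt (Z : T.Zigzag) (i : ℕ) (F : Finset V) : Prop :=
  F ∈ T.faces ∧ Z.seq i ⊆ F ∧ Z.seq (i + 1) ⊆ F

/-- At position `i`, the zigzag `Z` traverses the oriented edge from `x`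
to `y` (the head `y` is the vertex shared with the next edge). -/
def Zigzag.Passes (Z : T.Zigzag) (i : ℕ) (x y : V) : Prop :=
  Z.seq i = {x, y} ∧ x ≠ y ∧ y ∈ Z.seq (i + 1)

variable (T)

/-- The triangulation is locally z-knotted in the face `F`:
`𝒵(F) = {Z, Z⁻¹}`. -/
def LocallyZKnotted (F : Finset V) : Prop :=
  (∃ Z : T.Zigzag, Z.Meets F) ∧
  ∀ Z Z' : T.Zigzag, Z.Meets F → Z'.Meets F → Z.Equiv Z' ∨ Z'.IsReverseOf Z

/-- The triangulation is z-knotted: it has exactly one zigzag up to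
reversal. -/
def ZKnotted : Prop :=
  Nonempty T.Zigzag ∧ ∀ Z Z' : T.Zigzag, Z.Equiv Z' ∨ Z'.IsReverseOf Z

/-- The z-monodromy relation of the face `F`: `M_F` sends the oriented edge
`(x,y)` of `F` to the oriented edge `(u,v)` of `F`.  Here `(u,v)` is the first
oriented edge of `F` occurring in the zigzag through `D_F⁻¹(x,y), (x,y)`
after `(x,y)`. -/
def MonodromyRel (F : Finset V) (x y u v : V) : Prop :=
  x ∈ F ∧ y ∈ F ∧
  ∃ Z : T.Zigzag, ∃ i j : ℕ,
    (∃ z, z ∈ F ∧ z ≠ x ∧ z ≠ y ∧ Z.Passes i z x) ∧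
    Z.Passes (i + 1) x y ∧
    i + 1 < j ∧ Z.Passes j u v ∧ u ∈ F ∧ v ∈ F ∧
    (∀ k, i + 1 < k → k < j → ∀ a b, a ∈ F → b ∈ F → ¬ Z.Passes k a b)

/-- The z-monodromy of `F` is the identity (type (M1)). -/
def MFIsId (F : Finset V) : Prop :=
  ∀ x y, x ∈ F → y ∈ F → x ≠ y → T.MonodromyRel F x y x y

/-- The z-monodromy of `F` is `D_F` (type (M2)). -/
def MFIsD (F : Finset V) : Prop :=
  ∀ x y z : V, ({x, y, z} : Finset V) = F → x ≠ y → y ≠ z → x ≠ z →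
    T.MonodromyRel F x y y z

/-- The z-monodromy of `F` is `D_F⁻¹` (type (M5)). -/
def MFIsDInv (F : Finset V) : Prop :=
  ∀ x y z : V, ({x, y, z} : Finset V) = F → x ≠ y → y ≠ z → x ≠ z →
    T.MonodromyRel F x y z x

/-- The z-monodromy of `F` is of type (M3):
`M_F = (-e₁,e₂,e₃)(-e₃,-e₂,e₁)` for a cycle `(e₁,e₂,e₃)` of `D_F`. -/
def MFIsM3 (F : Finset V) : Prop :=
  ∃ x y z : V, ({x, y, z} : Finset V) = F ∧ x ≠ y ∧ y ≠ z ∧ x ≠ z ∧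
    T.MonodromyRel F y x y z ∧ T.MonodromyRel F y z z x ∧
    T.MonodromyRel F z x y x ∧ T.MonodromyRel F x z z y ∧
    T.MonodromyRel F z y x y ∧ T.MonodromyRel F x y x z

/-- The z-monodromy of `F` is of type (M4):
`M_F = (e₁,-e₂)(e₂,-e₁)` with `e₃, -e₃` fixed, for a cycle `(e₁,e₂,e₃)`
of `D_F`. -/
def MFIsM4 (F : Finset V) : Prop :=
  ∃ x y z : V, ({x, y, z} : Finset V) = F ∧ x ≠ y ∧ y ≠ z ∧ x ≠ z ∧
    T.MonodromyRel F x y z y ∧ T.MonodromyRel F z y x y ∧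
    T.MonodromyRel F y z y x ∧ T.MonodromyRel F y x y z ∧
    T.MonodromyRel F z x z x ∧ T.MonodromyRel F x z x z

/-- The dual graph: vertices are faces, adjacent iff they share an edge. -/
def dualGraph : SimpleGraph {F : Finset V // F ∈ T.faces} where
  Adj A B := A ≠ B ∧ ((A : Finset V) ∩ (B : Finset V)).card = 2
  symm := by
    constructor
    intro A B h
    exact ⟨h.1.symm, by rw [Finset.inter_comm]; exact h.2⟩
  loopless := by constructor; intro A h; exact h.1 rfl

end Triangulation

section

variable {V : Type} [DecidableEq V]

lemma Finset.eq_or_eq_of_card_eq_two {α : Type*} [DecidableEq α] {s : Finset α}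
    (hs : s.card = 2) {A B C : α} (hA : A ∈ s) (hB : B ∈ s) (hC : C ∈ s) (hAB : A ≠ B) :
    C = A ∨ C = B := by
  obtain ⟨P, Q, -, rfl⟩ := card_eq_two.mp hs
  simp only [mem_insert, mem_singleton] at hA hB hC
  rcases hA with rfl | rfl <;> rcases hB with rfl | rfl <;> tauto

lemma Finset.eq_or_eq_or_eq_of_subset_triangle {e : Finset V} {a b c : V} (he : e ⊆ {a, b, c})
    (hc : e.card = 2) : e = {a, b} ∨ e = {b, c} ∨ e = {c, a} := by
  obtain ⟨u, v, huv, rfl⟩ := card_eq_two.mp hc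
  have hu : u ∈ ({a, b, c} : Finset V) := he (by simp)
  have hv : v ∈ ({a, b, c} : Finset V) := he (by simp)
  simp only [mem_insert, mem_singleton] at hu hv
  rcases hu with rfl | rfl | rfl <;> rcases hv with rfl | rfl | rfl <;>
    simp_all [pair_comm]

lemma Finset.exists_eq_insert_pair_of_card_eq_three {s : Finset V} (hs : s.card = 3) {x y : V}
    (hx : x ∈ s) (hy : y ∈ s) (hxy : x ≠ y) : ∃ z, z ≠ x ∧ z ≠ y ∧ {x, y, z} = s := by
  have hxys : {x, y} ⊆ s := by simp [insert_subset_iff, hx, hy]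
  obtain ⟨z, hz⟩ := card_eq_one.mp
    (by rw [card_sdiff_of_subset hxys, hs, card_pair hxy] : (s \ {x, y}).card = 1)
  have hzs : z ∈ s \ {x, y} := hz ▸ mem_singleton_self z
  simp only [mem_sdiff, mem_insert, mem_singleton, not_or] at hzs
  refine ⟨z, hzs.2.1, hzs.2.2, eq_of_subset_of_card_le ?_ ?_⟩
  · simp [insert_subset_iff, hx, hy, hzs.1]
  · rw [hs, card_insert_of_notMem (by simp [hxy, Ne.symm hzs.2.1]),
      card_pair (Ne.symm hzs.2.2)]

lemma Finset.exists_triangles_of_card_inter_eq_two {F F' : Finset V} (hF : F.card = 3)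
    (hF' : F'.card = 3) (h : (F ∩ F').card = 2) :
    ∃ x y z w, x ≠ y ∧ z ≠ x ∧ z ≠ y ∧ w ≠ x ∧ w ≠ y ∧
      {x, y, z} = F ∧ {x, y, w} = F' ∧ z ∉ F' := by
  obtain ⟨x, y, hxy, hI⟩ := card_eq_two.mp h
  have hx : x ∈ F ∩ F' := by rw [hI]; simp
  have hy : y ∈ F ∩ F' := by rw [hI]; simp
  rw [mem_inter] at hx hy
  obtain ⟨z, hzx, hzy, hFz⟩ := exists_eq_insert_pair_of_card_eq_three hF hx.1 hy.1 hxy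
  obtain ⟨w, hwx, hwy, hFw⟩ := exists_eq_insert_pair_of_card_eq_three hF' hx.2 hy.2 hxy
  refine ⟨x, y, z, w, hxy, hzx, hzy, hwx, hwy, hFz, hFw, fun hz => ?_⟩
  have : z ∈ F ∩ F' := mem_inter.mpr ⟨hFz ▸ by simp, hz⟩
  rw [hI] at this
  simp_all

end

namespace Triangulation

variable {V : Type} [Fintype V] [DecidableEq V] {T : Triangulation V}

def IsZigzagTriple (T : Triangulation V) (e₁ e₂ e₃ : Finset V) : Prop :=
  T.IsEdge e₁ ∧ T.IsEdge e₂ ∧ T.IsEdge e₃ ∧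
  (e₁ ≠ e₂ ∧ (e₁ ∩ e₂).Nonempty ∧ ∃ A ∈ T.faces, e₁ ⊆ A ∧ e₂ ⊆ A) ∧
  (e₂ ≠ e₃ ∧ (e₂ ∩ e₃).Nonempty ∧ ∃ B ∈ T.faces, e₂ ⊆ B ∧ e₃ ⊆ B) ∧
  (∀ A ∈ T.faces, ∀ B ∈ T.faces, e₁ ⊆ A → e₂ ⊆ A → e₂ ⊆ B → e₃ ⊆ B → A ≠ B) ∧
  e₁ ∩ e₃ = ∅

lemma Zigzag.isZigzagTriple (Z : T.Zigzag) (i : ℕ) :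
    T.IsZigzagTriple (Z.seq i) (Z.seq (i + 1)) (Z.seq (i + 2)) := by
  obtain ⟨h1, h2, h3, h4⟩ := Z.isZigzag
  exact ⟨h1 i, h1 (i + 1), h1 (i + 2), h2 i, h2 (i + 1), h3 i, h4 i⟩

lemma IsZigzagTriple.symm {e₁ e₂ e₃ : Finset V} (h : T.IsZigzagTriple e₁ e₂ e₃) :
    T.IsZigzagTriple e₃ e₂ e₁ := by
  obtain ⟨h₁, h₂, h₃, ⟨h12, i12, A, hA, h1A, h2A⟩, ⟨h23, i23, B, hB, h2B, h3B⟩, hAB, h13⟩ := h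
  refine ⟨h₃, h₂, h₁, ⟨h23.symm, by rwa [inter_comm], B, hB, h3B, h2B⟩,
    ⟨h12.symm, by rwa [inter_comm], A, hA, h2A, h1A⟩,
    fun A hA B hB h3A h2A h2B h1B => (hAB B hB A hA h1B h2B h2A h3A).symm, by rwa [inter_comm]⟩

/-- The third edge is the edge opposite to `e₁ ∩ e₂` in the second face through `e₂`. -/
lemma IsZigzagTriple.eq {e₁ e₂ e₃ e₃' : Finset V} (h : T.IsZigzagTriple e₁ e₂ e₃)
    (h' : T.IsZigzagTriple e₁ e₂ e₃') : e₃ = e₃' := by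
  obtain ⟨-, he₂, he₃, ⟨-, ⟨v, hv⟩, A, hA, h1A, h2A⟩, ⟨-, -, B, hB, h2B, h3B⟩, hAB, h13⟩ := h
  obtain ⟨-, -, he₃', -, ⟨-, -, B', hB', h2B', h3B'⟩, hAB', h13'⟩ := h'
  rw [mem_inter] at hv
  have hcard := T.edge_two_faces e₂ he₂.1 ⟨A, hA, h2A⟩
  have hB'B : B' = B := by
    rcases eq_or_eq_of_card_eq_two hcard (mem_filter.mpr ⟨hA, h2A⟩)
      (mem_filter.mpr ⟨hB, h2B⟩) (mem_filter.mpr ⟨hB', h2B'⟩)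
      (hAB A hA B hB h1A h2A h2B h3B) with h | h
    · exact absurd h.symm (hAB' A hA B' hB' h1A h2A h2B' h3B')
    · exact h
  rw [hB'B] at h3B'
  have hopp : ∀ e : Finset V, e.card = 2 → e ⊆ B → e₁ ∩ e = ∅ → e = B.erase v := by
    intro e hc heB h1e
    refine eq_of_subset_of_card_le (fun t ht => mem_erase.mpr ⟨?_, heB ht⟩) ?_
    · rintro rfl
      simpa [h1e] using mem_inter.mpr ⟨hv.1, ht⟩
    · rw [card_erase_of_mem (h2B hv.2), T.card_eq B hB, hc]
  rw [hopp e₃ he₃.1 h3B h13, hopp e₃' he₃'.1 h3B' h13']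

lemma eq_of_isZigzagTriple {f g : ℕ → Finset V}
    (hf : ∀ n, T.IsZigzagTriple (f n) (f (n + 1)) (f (n + 2)))
    (hg : ∀ n, T.IsZigzagTriple (g n) (g (n + 1)) (g (n + 2)))
    (h0 : f 0 = g 0) (h1 : f 1 = g 1) (n : ℕ) : f n = g n := by
  suffices ∀ n, f n = g n ∧ f (n + 1) = g (n + 1) from (this n).1
  intro n
  induction n with
  | zero => exact ⟨h0, h1⟩
  | succ k ih =>
    refine ⟨ih.2, ?_⟩
    have hk := hf k
    rw [ih.1, ih.2] at hk
    exact hk.eq (hg k)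

namespace Zigzag

lemma seq_add_eq_of_seq_eq (Z W : T.Zigzag) {i j : ℕ} (h0 : Z.seq i = W.seq j)
    (h1 : Z.seq (i + 1) = W.seq (j + 1)) (n : ℕ) : Z.seq (i + n) = W.seq (j + n) :=
  eq_of_isZigzagTriple (fun n => Z.isZigzagTriple (i + n)) (fun n => W.isZigzagTriple (j + n))
    h0 h1 n

lemma two_le_period (Z : T.Zigzag) : 2 ≤ Z.period := by
  by_contra! h
  have h1 : Z.period = 1 := by have := Z.period_pos; omega
  exact (Z.isZigzag.2.1 0).1 (h1 ▸ Z.periodic 0).symm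

lemma exists_forall_seq_eq_seq_add (Z : T.Zigzag) (l : ℕ) :
    ∃ c, ∀ i, Z.seq i = Z.seq (l + (i + c)) := by
  refine ⟨l * Z.period - l, fun i => ?_⟩
  have : l ≤ l * Z.period := Nat.le_mul_of_pos_right l Z.period_pos
  rw [show l + (i + (l * Z.period - l)) = i + l * Z.period by omega]
  exact (Function.Periodic.nat_mul Z.periodic l i).symm

lemma period_le_of_seq_eq (Z : T.Zigzag) {i j : ℕ} (hij : i < j) (h0 : Z.seq j = Z.seq i)
    (h1 : Z.seq (j + 1) = Z.seq (i + 1)) : Z.period ≤ j - i := by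
  refine Z.period_min _ (by omega) fun m => ?_
  obtain ⟨c, hc⟩ := Z.exists_forall_seq_eq_seq_add i
  calc Z.seq (m + (j - i)) = Z.seq (i + (m + (j - i) + c)) := hc _
    _ = Z.seq (j + (m + c)) := by congr 1; omega
    _ = Z.seq (i + (m + c)) := seq_add_eq_of_seq_eq Z Z h0 h1 _
    _ = Z.seq m := (hc m).symm

lemma equiv_of_seq_eq (Z Z' : T.Zigzag) {k l : ℕ} (h0 : Z'.seq l = Z.seq k)
    (h1 : Z'.seq (l + 1) = Z.seq (k + 1)) : Z.Equiv Z' := by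
  obtain ⟨c, hc⟩ := Z'.exists_forall_seq_eq_seq_add l
  refine ⟨k + c, fun i => ?_⟩
  rw [hc, seq_add_eq_of_seq_eq Z' Z h0 h1]
  congr 1
  omega

lemma seq_add_sub_add_mod (Z : T.Zigzag) (K n : ℕ) {j : ℕ} (hj : j ≤ Z.period) :
    Z.seq (K + Z.period - (n + j) % Z.period) =
      Z.seq (K + 2 * Z.period - n % Z.period - j) := by
  have hn := Nat.mod_lt n Z.period_pos
  rw [← Nat.mod_add_mod]
  rcases lt_or_ge (n % Z.period + j) Z.period with h | h
  · rw [Nat.mod_eq_of_lt h, ← Z.periodic]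
    congr 1
    omega
  · rw [Nat.mod_eq_sub_mod h, Nat.mod_eq_of_lt (by omega)]
    congr 1
    omega

/-- Read backwards, a zigzag is again a zigzag sequence. -/
lemma isZigzagTriple_reverse (Z : T.Zigzag) (K n : ℕ) :
    T.IsZigzagTriple (Z.seq (K + Z.period - n % Z.period))
      (Z.seq (K + Z.period - (n + 1) % Z.period))
      (Z.seq (K + Z.period - (n + 2) % Z.period)) := by
  have hp := Z.two_le_period
  have hn := Nat.mod_lt n Z.period_pos
  have e₀ := Z.seq_add_sub_add_mod K n (j := 0) (by omega)
  have e₁ := Z.seq_add_sub_add_mod K n (j := 1) (by omega)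
  have e₂ := Z.seq_add_sub_add_mod K n (j := 2) hp
  rw [show K + 2 * Z.period - n % Z.period - 0 = K + 2 * Z.period - n % Z.period - 2 + 2
    by omega, add_zero] at e₀
  rw [show K + 2 * Z.period - n % Z.period - 1 = K + 2 * Z.period - n % Z.period - 2 + 1
    by omega] at e₁
  rw [e₀, e₁, e₂]
  exact (Z.isZigzagTriple _).symm

lemma isReverseOf_of_seq_eq (Z Z' : T.Zigzag) {k l : ℕ} (h0 : Z'.seq l = Z.seq (k + 1))
    (h1 : Z'.seq (l + 1) = Z.seq k) : Z'.IsReverseOf Z := by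
  have hp := Z.two_le_period
  have hrev : ∀ n, Z'.seq (l + n) = Z.seq (k + 1 + Z.period - n % Z.period) := by
    refine eq_of_isZigzagTriple (fun n => Z'.isZigzagTriple (l + n))
      (Z.isZigzagTriple_reverse (k + 1)) ?_ ?_
    · simpa [Z.periodic] using h0
    · rw [Nat.mod_eq_of_lt (by omega : 1 < Z.period), show k + 1 + Z.period - 1 = k + Z.period
        by omega, Z.periodic]
      exact h1
  obtain ⟨c, hc⟩ := Z'.exists_forall_seq_eq_seq_add l
  refine ⟨k + 1 + Z.period - c % Z.period, fun i => ?_⟩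
  have := Nat.mod_lt c Z.period_pos
  rw [hc, hrev, ← Nat.add_mod_mod, seq_add_sub_add_mod _ _ _ this.le]
  congr 1
  omega

/-- The two faces through `Z.seq (k + 1)` are the one it shares with `Z.seq k` and the one it
shares with `Z.seq (k + 2)`. -/
lemma subset_or_subset (Z : T.Zigzag) (k : ℕ) {G : Finset V} (hG : G ∈ T.faces)
    (h : Z.seq (k + 1) ⊆ G) : Z.seq k ⊆ G ∨ Z.seq (k + 2) ⊆ G := by
  obtain ⟨-, -, A, hA, hkA, hk₁A⟩ := Z.isZigzag.2.1 k
  obtain ⟨-, -, B, hB, hk₁B, hk₂B⟩ := Z.isZigzag.2.1 (k + 1)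
  have hcard := T.edge_two_faces _ (Z.isZigzag.1 (k + 1)).1 ⟨A, hA, hk₁A⟩
  rcases Finset.eq_or_eq_of_card_eq_two hcard (mem_filter.mpr ⟨hA, hk₁A⟩)
      (mem_filter.mpr ⟨hB, hk₁B⟩) (mem_filter.mpr ⟨hG, h⟩)
      (Z.isZigzag.2.2.1 k A hA B hB hkA hk₁A hk₁B hk₂B) with rfl | rfl
  exacts [Or.inl hkA, Or.inr hk₂B]

lemma exists_passes (Z : T.Zigzag) (k : ℕ) : ∃ u v, Z.Passes k u v := by
  obtain ⟨-, ⟨v, hv⟩, -⟩ := Z.isZigzag.2.1 k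
  obtain ⟨u, u', huu', he⟩ := card_eq_two.mp (Z.isZigzag.1 k).1
  rw [mem_inter, he, mem_insert, mem_singleton] at hv
  rcases hv with ⟨rfl | rfl, hv⟩
  · exact ⟨u', v, he.trans (pair_comm _ _), huu'.symm, hv⟩
  · exact ⟨u, v, he, huu', hv⟩

lemma seq_succ_eq_of_passes (Z : T.Zigzag) {j : ℕ} {u v t : V} (h : Z.Passes j u v)
    (hsub : Z.seq (j + 1) ⊆ {u, v, t}) : Z.seq (j + 1) = {v, t} := by
  have hne := (Z.isZigzag.2.1 j).1
  rcases Finset.eq_or_eq_or_eq_of_subset_triangle hsub (Z.isZigzag.1 (j + 1)).1 with e | e | e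
  · exact absurd (h.1.trans e.symm) hne
  · exact e
  · have hv := h.2.2
    rw [e, mem_insert, mem_singleton] at hv
    rcases hv with rfl | rfl
    · exact absurd (h.1.trans (e.trans (pair_comm _ _)).symm) hne
    · exact absurd rfl h.2.1

end Zigzag

lemma MonodromyRel.exists_zigzag {F : Finset V} {x y z u v : V} (h : T.MonodromyRel F x y u v)
    (hF : {x, y, z} = F) :
    ∃ (W : T.Zigzag) (i j : ℕ), W.seq i = {z, x} ∧ W.Passes (i + 1) x y ∧ i + 1 < j ∧
      W.Passes j u v ∧ ∀ k, i + 1 < k → k < j → ¬ W.seq k ⊆ F := by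
  obtain ⟨-, -, W, i, j, ⟨z', hz'F, hz'x, hz'y, hz'⟩, hxy, hij, huv, -, -, hgap⟩ := h
  obtain rfl : z' = z := by
    rw [← hF, mem_insert, mem_insert, mem_singleton] at hz'F
    tauto
  refine ⟨W, i, j, hz'.1, hxy, hij, huv, fun k hk hk' hkF => ?_⟩
  obtain ⟨a, b, hab⟩ := W.exists_passes k
  exact hgap k hk hk' a b (hkF (by rw [hab.1]; simp)) (hkF (by rw [hab.1]; simp)) hab

lemma MFIsD.exists_next_pair {F : Finset V} (hD : T.MFIsD F) (hF : F ∈ T.faces)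
    (Z : T.Zigzag) {i : ℕ} {a b c : V} (hab : a ≠ b) (hbc : b ≠ c) (hac : a ≠ c)
    (hFd : {a, b, c} = F) (h0 : Z.seq i = {a, c}) (h1 : Z.seq (i + 1) = {c, b}) :
    ∃ q, i + 3 ≤ q ∧ Z.seq q = {b, a} ∧ Z.seq (q + 1) = {a, c} ∧
      ∀ k, i + 1 < k → k < q → ¬ Z.seq k ⊆ F := by
  have hFd' : {c, b, a} = F := by rw [← hFd]; ext; simp only [mem_insert, mem_singleton]; tauto
  obtain ⟨W, i₀, j₀, hW₀, hW₁, hij, hWj, hgap⟩ :=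
    (hD c b a hFd' hbc.symm hab.symm hac.symm).exists_zigzag hFd'
  have hZW := Zigzag.seq_add_eq_of_seq_eq Z W (h0.trans hW₀.symm) (h1.trans hW₁.1.symm)
  have hq : Z.seq (i + (j₀ - i₀)) = {b, a} := by
    rw [hZW, show i₀ + (j₀ - i₀) = j₀ by omega, hWj.1]
  have haq : a ∈ Z.seq (i + (j₀ - i₀) + 1) := by
    rw [add_assoc, hZW, show i₀ + (j₀ - i₀ + 1) = j₀ + 1 by omega]
    exact hWj.2.2
  have hgapZ : ∀ k, i + 1 < k → k < i + (j₀ - i₀) → ¬ Z.seq k ⊆ F := fun k hk hk' => by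
    rw [show k = i + (k - i) by omega, hZW]
    exact hgap _ (by omega) (by omega)
  have hq₃ : i + 3 ≤ i + (j₀ - i₀) := by
    by_contra!
    have hai : a ∈ Z.seq i ∩ Z.seq (i + 2) := by
      rw [mem_inter, h0, show i + 2 = i + (j₀ - i₀) by omega, hq]
      simp
    simp [Z.isZigzag.2.2.2 i] at hai
  have hqF : Z.seq (i + (j₀ - i₀) + 1) ⊆ F := by
    have h := Z.subset_or_subset (i + (j₀ - i₀) - 1) hF
      (by rw [show i + (j₀ - i₀) - 1 + 1 = i + (j₀ - i₀) by omega, hq, ← hFd]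
          simp [insert_subset_iff])
    rw [show i + (j₀ - i₀) - 1 + 2 = i + (j₀ - i₀) + 1 by omega] at h
    exact h.resolve_left (hgapZ _ (by omega) (by omega))
  have hFd'' : {b, a, c} = F := by rw [← hFd]; ext; simp only [mem_insert, mem_singleton]; tauto
  exact ⟨_, hq₃, hq, Z.seq_succ_eq_of_passes ⟨hq, hab.symm, haq⟩ (hFd'' ▸ hqF), hgapZ⟩

/-- How a zigzag meets a face of type (M2) during one period. -/
structure Zigzag.M2Window (Z : T.Zigzag) (F : Finset V) (a b c : V) (i q₁ q₂ : ℕ) : Prop where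
  face_mem : F ∈ T.faces
  triangle_eq : {a, b, c} = F
  add_three_le_q₁ : i + 3 ≤ q₁
  q₁_add_three_le_q₂ : q₁ + 3 ≤ q₂
  q₂_add_three_le : q₂ + 3 ≤ i + Z.period
  seq_i : Z.seq i = {a, c}
  seq_i_succ : Z.seq (i + 1) = {c, b}
  seq_q₁ : Z.seq q₁ = {b, a}
  seq_q₁_succ : Z.seq (q₁ + 1) = {a, c}
  seq_q₂ : Z.seq q₂ = {c, b}
  seq_q₂_succ : Z.seq (q₂ + 1) = {b, a}
  subset_cases : ∀ k, i ≤ k → k < i + Z.period → Z.seq k ⊆ F →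
    k = i ∨ k = i + 1 ∨ k = q₁ ∨ k = q₁ + 1 ∨ k = q₂ ∨ k = q₂ + 1

/-- Applying `M_F = D_F` three times brings the zigzag back to `(ac, cb)`, after exactly one
period. -/
lemma MFIsD.exists_m2Window {F : Finset V} (hD : T.MFIsD F) (hF : F ∈ T.faces)
    (Z : T.Zigzag) {i : ℕ} {a b c : V} (hab : a ≠ b) (hbc : b ≠ c) (hac : a ≠ c)
    (hFd : {a, b, c} = F) (h0 : Z.seq i = {a, c}) (h1 : Z.seq (i + 1) = {c, b}) :
    ∃ q₁ q₂, Z.M2Window F a b c i q₁ q₂ := by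
  have hsub : ∀ {s : Finset V}, s ⊆ {a, b, c} → s ⊆ F := fun h => hFd ▸ h
  obtain ⟨q₁, hq₁, h₁, h₁', hgap₁⟩ := hD.exists_next_pair hF Z hab hbc hac hFd h0 h1
  obtain ⟨q₂, hq₂, h₂, h₂', hgap₂⟩ := hD.exists_next_pair hF Z hbc hac.symm hab.symm
    (by rw [← hFd]; ext; simp only [mem_insert, mem_singleton]; tauto) h₁ h₁'
  obtain ⟨q₃, hq₃, h₃, h₃', hgap₃⟩ := hD.exists_next_pair hF Z hac.symm hab hbc.symm
    (by rw [← hFd]; ext; simp only [mem_insert, mem_singleton]; tauto) h₂ h₂'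
  have hpos : ∀ k, i ≤ k → k ≤ q₃ + 1 → Z.seq k ⊆ F → k = i ∨ k = i + 1 ∨ k = q₁ ∨
      k = q₁ + 1 ∨ k = q₂ ∨ k = q₂ + 1 ∨ k = q₃ ∨ k = q₃ + 1 := by
    intro k hk hk' hkF
    by_contra! hne
    obtain h | h | h : (i + 1 < k ∧ k < q₁) ∨ (q₁ + 1 < k ∧ k < q₂) ∨ (q₂ + 1 < k ∧ k < q₃) := by
      omega
    exacts [hgap₁ k h.1 h.2 hkF, hgap₂ k h.1 h.2 hkF, hgap₃ k h.1 h.2 hkF]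
  have hperiod : i + Z.period = q₃ := by
    have hle := Z.period_le_of_seq_eq (by omega) (h₃.trans h0.symm) (h₃'.trans h1.symm)
    have hp := Z.two_le_period
    have e₀ : Z.seq (i + Z.period) = {a, c} := by rw [Z.periodic, h0]
    have e₁ : Z.seq (i + Z.period + 1) = {c, b} := by rw [add_right_comm, Z.periodic, h1]
    have := hpos (i + Z.period) (by omega) (by omega)
      (hsub (by rw [e₀]; simp [insert_subset_iff]))
    have := hpos (i + Z.period + 1) (by omega) (by omega)
      (hsub (by rw [e₁]; simp [insert_subset_iff]))
    obtain h | h | h : i + Z.period = q₁ ∨ i + Z.period = q₂ ∨ i + Z.period = q₃ := by omega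
    · have hc : c ∈ ({b, a} : Finset V) := by rw [← h₁, ← h, e₀]; simp
      simp only [mem_insert, mem_singleton] at hc
      rcases hc with rfl | rfl
      exacts [absurd rfl hbc, absurd rfl hac]
    · have ha : a ∈ ({c, b} : Finset V) := by rw [← h₂, ← h, e₀]; simp
      simp only [mem_insert, mem_singleton] at ha
      rcases ha with rfl | rfl
      exacts [absurd rfl hac, absurd rfl hab]
    · exact h
  refine ⟨q₁, q₂, hF, hFd, hq₁, hq₂, by omega, h0, h1, h₁, h₁', h₂, h₂', fun k hk hk' hkF => ?_⟩
  have := hpos k hk (by omega) hkF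
  omega

namespace Zigzag.M2Window

variable {Z : T.Zigzag} {F : Finset V} {a b c : V} {i q₁ q₂ : ℕ}

lemma subset_face (hW : Z.M2Window F a b c i q₁ q₂) {s : Finset V} (h : s ⊆ {a, b, c}) :
    s ⊆ F :=
  hW.triangle_eq ▸ h

lemma shadowAt_i (hW : Z.M2Window F a b c i q₁ q₂) : Z.ShadowAt i F :=
  ⟨hW.face_mem, hW.subset_face (by rw [hW.seq_i]; simp [insert_subset_iff]),
    hW.subset_face (by rw [hW.seq_i_succ]; simp [insert_subset_iff])⟩

lemma shadowAt_q₁ (hW : Z.M2Window F a b c i q₁ q₂) : Z.ShadowAt q₁ F :=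
  ⟨hW.face_mem, hW.subset_face (by rw [hW.seq_q₁]; simp [insert_subset_iff]),
    hW.subset_face (by rw [hW.seq_q₁_succ]; simp [insert_subset_iff])⟩

lemma shadowAt_q₂ (hW : Z.M2Window F a b c i q₁ q₂) : Z.ShadowAt q₂ F :=
  ⟨hW.face_mem, hW.subset_face (by rw [hW.seq_q₂]; simp [insert_subset_iff]),
    hW.subset_face (by rw [hW.seq_q₂_succ]; simp [insert_subset_iff])⟩

lemma shadowAt_cases (hW : Z.M2Window F a b c i q₁ q₂) (k : ℕ) (hk : i ≤ k)
    (hk' : k < i + Z.period) (hkF : Z.ShadowAt k F) : k = i ∨ k = q₁ ∨ k = q₂ := by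
  have := hW.subset_cases k hk hk' hkF.2.1
  have := hW.add_three_le_q₁
  have := hW.q₁_add_three_le_q₂
  have := hW.q₂_add_three_le
  by_cases hk₁ : k + 1 < i + Z.period
  · have := hW.subset_cases (k + 1) (by omega) hk₁ hkF.2.2
    omega
  · omega

/-- The only edge of `F` missing `a` is `cb`. -/
lemma eq_of_notMem (hW : Z.M2Window F a b c i q₁ q₂) {k : ℕ} (hk : i ≤ k)
    (hk' : k < i + Z.period) (hkF : Z.seq k ⊆ F) (ha : a ∉ Z.seq k) : k = i + 1 ∨ k = q₂ := by
  rcases hW.subset_cases k hk hk' hkF with h | h | h | h | h | h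
  · rw [h, hW.seq_i] at ha; simp at ha
  · exact Or.inl h
  · rw [h, hW.seq_q₁] at ha; simp at ha
  · rw [h, hW.seq_q₁_succ] at ha; simp at ha
  · exact Or.inr h
  · rw [h, hW.seq_q₂_succ] at ha; simp at ha

/-- Every ordered pair of distinct edges of `F` is passed by `Z`, forwards or backwards. -/
lemma equiv_or_isReverseOf (hW : Z.M2Window F a b c i q₁ q₂) (Z' : T.Zigzag) {j : ℕ}
    (hj : Z'.ShadowAt j F) : Z.Equiv Z' ∨ Z'.IsReverseOf Z := by
  have hF : F = {a, c, b} := by rw [← hW.triangle_eq, pair_comm b c]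
  have hne := (Z'.isZigzag.2.1 j).1
  rcases Finset.eq_or_eq_or_eq_of_subset_triangle (hF ▸ hj.2.1) (Z'.isZigzag.1 j).1
    with e | e | e <;>
  rcases Finset.eq_or_eq_or_eq_of_subset_triangle (hF ▸ hj.2.2) (Z'.isZigzag.1 (j + 1)).1
    with e' | e' | e' <;>
  first
  | exact absurd (e.trans e'.symm) hne
  | exact Or.inl (equiv_of_seq_eq Z Z' (e.trans hW.seq_i.symm) (e'.trans hW.seq_i_succ.symm))
  | exact Or.inl (equiv_of_seq_eq Z Z' (e.trans hW.seq_q₁.symm) (e'.trans hW.seq_q₁_succ.symm))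
  | exact Or.inl (equiv_of_seq_eq Z Z' (e.trans hW.seq_q₂.symm) (e'.trans hW.seq_q₂_succ.symm))
  | exact Or.inr (isReverseOf_of_seq_eq Z Z' (e.trans hW.seq_i_succ.symm) (e'.trans hW.seq_i.symm))
  | exact Or.inr
      (isReverseOf_of_seq_eq Z Z' (e.trans hW.seq_q₁_succ.symm) (e'.trans hW.seq_q₁.symm))
  | exact Or.inr
      (isReverseOf_of_seq_eq Z Z' (e.trans hW.seq_q₂_succ.symm) (e'.trans hW.seq_q₂.symm))

end Zigzag.M2Window

end Triangulation

theorem adjacent_M2_faces_shadow_general {V : Type} [Fintype V] [DecidableEq V]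
    (T : Triangulation V) (F F' : Finset V)
    (hF : F ∈ T.faces) (hF' : F' ∈ T.faces)
    (hadj : (F ∩ F').card = 2)
    (h2 : T.MFIsD F) (h2' : T.MFIsD F') :
    ∃ Z : T.Zigzag, ∃ a₁ a₂ a₃ b₁ b₂ b₃ : ℕ,
      a₁ < b₁ ∧ b₁ < a₂ ∧ a₂ < b₂ ∧ b₂ < a₃ ∧ a₃ < b₃ ∧ b₃ < a₁ + Z.period ∧
      Z.ShadowAt a₁ F ∧ Z.ShadowAt a₂ F ∧ Z.ShadowAt a₃ F ∧
      Z.ShadowAt b₁ F' ∧ Z.ShadowAt b₂ F' ∧ Z.ShadowAt b₃ F' ∧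
      (∀ i, a₁ ≤ i → i < a₁ + Z.period → Z.ShadowAt i F →
        i = a₁ ∨ i = a₂ ∨ i = a₃) ∧
      (∀ i, a₁ ≤ i → i < a₁ + Z.period → Z.ShadowAt i F' →
        i = b₁ ∨ i = b₂ ∨ i = b₃) ∧
      (∀ Z' : T.Zigzag, (∃ i, Z'.ShadowAt i F) → (∃ j, Z'.ShadowAt j F') →
        Z.Equiv Z' ∨ Z'.IsReverseOf Z) := by
  obtain ⟨x, y, z, w, hxy, hzx, hzy, hwx, hwy, hFxyz, hF'xyw, hzF'⟩ :=
    Finset.exists_triangles_of_card_inter_eq_two (T.card_eq F hF) (T.card_eq F' hF') hadj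
  obtain ⟨Z, i, -, h0, h1, -⟩ := (h2 x y z hFxyz hxy hzy.symm hzx.symm).exists_zigzag hFxyz
  have h2v : Z.seq (i + 2) = {y, w} := by
    refine Z.seq_succ_eq_of_passes h1 (hF'xyw ▸ ?_)
    refine (Z.subset_or_subset i hF' ?_).resolve_left fun h => hzF' (h (by rw [h0]; simp))
    rw [h1.1, ← hF'xyw]
    simp [insert_subset_iff]
  obtain ⟨q₁, q₂, hW⟩ := h2.exists_m2Window hF Z hzy hxy.symm hzx
    (by rw [← hFxyz]; ext; simp only [mem_insert, mem_singleton]; tauto) h0 h1.1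
  obtain ⟨r₁, r₂, hW'⟩ := h2'.exists_m2Window hF' Z hwx.symm hwy hxy
    (by rw [← hF'xyw]; ext; simp only [mem_insert, mem_singleton]; tauto) h1.1 h2v
  have := hW.add_three_le_q₁; have := hW.q₁_add_three_le_q₂; have := hW.q₂_add_three_le
  have := hW'.add_three_le_q₁; have := hW'.q₁_add_three_le_q₂; have := hW'.q₂_add_three_le
  have halign : r₁ + 1 = q₂ := by
    have := hW.eq_of_notMem (k := r₁ + 1) (by omega) (by omega)
      (hW.subset_face (by rw [hW'.seq_q₁_succ]; simp [insert_subset_iff]))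
      (by rw [hW'.seq_q₁_succ]; simp [hzx, hzy])
    omega
  refine ⟨Z, i, q₁, q₂, i + 1, r₁, r₂, by omega, by omega, by omega, by omega, by omega, by omega,
    hW.shadowAt_i, hW.shadowAt_q₁, hW.shadowAt_q₂, hW'.shadowAt_i, hW'.shadowAt_q₁,
    hW'.shadowAt_q₂, hW.shadowAt_cases, fun k hk hk' hkF' => ?_,
    fun Z' ⟨j, hj⟩ _ => hW.equiv_or_isReverseOf Z' hj⟩
  rcases hk.eq_or_lt with rfl | hk
  · exact absurd (hkF'.2.1 (by rw [h0]; simp)) hzF'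
  · exact hW'.shadowAt_cases k hk (by omega) hkF'

/-- if `F, F'` are adjacent faces whose z-monodromies are
`D_F` and `D_{F'}` respectively, then there is a unique (up to reversal)
zigzag whose face shadow contains `F` and `F'`, and in its face shadow the
occurrences of `F` and `F'` alternate. -/
theorem adjacent_M2_faces_shadow {V : Type} [Fintype V] [DecidableEq V]
    (T : Triangulation V) (F F' : Finset V)
    (hF : F ∈ T.faces) (hF' : F' ∈ T.faces) (hne : F ≠ F')
    (hadj : (F ∩ F').card = 2)
    (h2 : T.MFIsD F) (h2' : T.MFIsD F') :
    ∃ Z : T.Zigzag, ∃ a₁ a₂ a₃ b₁ b₂ b₃ : ℕ,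
      a₁ < b₁ ∧ b₁ < a₂ ∧ a₂ < b₂ ∧ b₂ < a₃ ∧ a₃ < b₃ ∧ b₃ < a₁ + Z.period ∧
      Z.ShadowAt a₁ F ∧ Z.ShadowAt a₂ F ∧ Z.ShadowAt a₃ F ∧
      Z.ShadowAt b₁ F' ∧ Z.ShadowAt b₂ F' ∧ Z.ShadowAt b₃ F' ∧
      (∀ i, a₁ ≤ i → i < a₁ + Z.period → Z.ShadowAt i F →
        i = a₁ ∨ i = a₂ ∨ i = a₃) ∧
      (∀ i, a₁ ≤ i → i < a₁ + Z.period → Z.ShadowAt i F' →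
        i = b₁ ∨ i = b₂ ∨ i = b₃) ∧
      (∀ Z' : T.Zigzag, (∃ i, Z'.ShadowAt i F) → (∃ j, Z'.ShadowAt j F') →
        Z.Equiv Z' ∨ Z'.IsReverseOf Z) :=
  adjacent_M2_faces_shadow_general T F F' hF hF' hadj h2 h2'
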